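/- arXiv:0906.2214 — 8 statements merged into one kernel-verified Lean document; each statement's English description precedes it below -/
import Mathlib

section
/- Let f be a real polynomial in d variables whose total degree n = 2m is even and whose degree-n homogeneous part f_n satisfies f_n(x) > 0 for every nonzero x ∈ ℝ^d. Then f is bounded from below on ℝ^d, i.e., there exists μ ∈ ℝ with f(x) ≥ μ for all x ∈ ℝ^d. -/
/-!
Write `f = f_n + g` with `deg g ≤ n - 1`. Since `f_n` is positive on the compact unit sphere,
homogeneity gives `f_n x ≥ c ‖x‖ ^ n` with `c > 0`, while `|g x| ≤ C ‖x‖ ^ (n - 1)` once `‖x‖ ≥ 1`.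
Hence `f` tends to `+∞` at infinity, and the continuous function `f` attains a minimum.
-/

open MvPolynomial Finset Filter

namespace MvPolynomial

variable {ι : Type*}

theorem IsHomogeneous.eval_smul {R : Type*} [CommSemiring R] {p : MvPolynomial ι R} {n : ℕ}
    (hp : p.IsHomogeneous n) (r : R) (x : ι → R) : eval (r • x) p = r ^ n * eval x p := by
  rw [eval_eq, eval_eq, mul_sum]
  refine sum_congr rfl fun e he => ?_
  have hdeg : ∑ i ∈ e.support, e i = n := by
    simpa [Finsupp.weight, Finsupp.linearCombination, Finsupp.sum] using hp (mem_support_iff.mp he)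
  simp only [Pi.smul_apply, smul_eq_mul, mul_pow, prod_mul_distrib, prod_pow_eq_pow_sum, hdeg]
  ring

theorem totalDegree_sub_homogeneousComponent_le {R : Type*} [CommRing R] (p : MvPolynomial ι R) :
    (p - homogeneousComponent p.totalDegree p).totalDegree ≤ p.totalDegree - 1 := by
  have hsplit : p - homogeneousComponent p.totalDegree p =
      ∑ i ∈ range p.totalDegree, homogeneousComponent i p := by
    nth_rw 1 [← sum_homogeneousComponent p]
    rw [sum_range_succ, add_sub_cancel_right]
  rw [hsplit]
  refine (totalDegree_finsetSum _ _).trans (Finset.sup_le fun i hi => ?_)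
  exact (homogeneousComponent_isHomogeneous i p).totalDegree_le.trans
    (Nat.le_sub_one_of_lt (mem_range.mp hi))

variable [Fintype ι]

theorem abs_eval_le_of_one_le_norm {p : MvPolynomial ι ℝ} {k : ℕ} (hk : p.totalDegree ≤ k)
    {x : ι → ℝ} (hx : 1 ≤ ‖x‖) :
    |eval x p| ≤ (∑ e ∈ p.support, |p.coeff e|) * ‖x‖ ^ k := by
  rw [eval_eq, sum_mul]
  refine (abs_sum_le_sum_abs _ _).trans (sum_le_sum fun e he => ?_)
  rw [abs_mul]
  refine mul_le_mul_of_nonneg_left ?_ (abs_nonneg _)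
  calc |∏ i ∈ e.support, x i ^ e i| = ∏ i ∈ e.support, |x i| ^ e i := by
        simp only [abs_prod, abs_pow]
    _ ≤ ∏ i ∈ e.support, ‖x‖ ^ e i :=
        prod_le_prod (fun i _ => by positivity) fun i _ =>
          pow_le_pow_left₀ (abs_nonneg _) (norm_le_pi_norm x i) _
    _ = ‖x‖ ^ ∑ i ∈ e.support, e i := prod_pow_eq_pow_sum _ _ _
    _ ≤ ‖x‖ ^ k := pow_le_pow_right₀ hx ((le_totalDegree he).trans hk)

theorem IsHomogeneous.exists_mul_norm_pow_le_eval {F : MvPolynomial ι ℝ} {n : ℕ}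
    (hF : F.IsHomogeneous n) (hpos : ∀ x : ι → ℝ, x ≠ 0 → 0 < eval x F) :
    ∃ c > 0, ∀ x : ι → ℝ, x ≠ 0 → c * ‖x‖ ^ n ≤ eval x F := by
  obtain _ | _ := subsingleton_or_nontrivial (ι → ℝ)
  · exact ⟨1, one_pos, fun x hx => absurd (Subsingleton.elim x 0) hx⟩
  obtain ⟨u₀, hu₀, hmin⟩ := (isCompact_sphere (0 : ι → ℝ) 1).exists_isMinOn
    (NormedSpace.sphere_nonempty.mpr zero_le_one) (continuous_eval F).continuousOn
  have hu₀ne : u₀ ≠ 0 := ne_zero_of_mem_unit_sphere ⟨u₀, hu₀⟩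
  refine ⟨eval u₀ F, hpos u₀ hu₀ne, fun x hx => ?_⟩
  have hr : 0 < ‖x‖ := norm_pos_iff.mpr hx
  have hu : ‖x‖⁻¹ • x ∈ Metric.sphere (0 : ι → ℝ) 1 := by
    simp [norm_smul, hr.ne']
  calc eval u₀ F * ‖x‖ ^ n ≤ eval (‖x‖⁻¹ • x) F * ‖x‖ ^ n :=
        mul_le_mul_of_nonneg_right (hmin hu) (by positivity)
    _ = eval x F := by
        rw [hF.eval_smul, inv_pow, mul_right_comm, inv_mul_cancel₀ (pow_pos hr n).ne', one_mul]

theorem tendsto_eval_cocompact_atTop {p : MvPolynomial ι ℝ} (hp : 0 < p.totalDegree)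
    (hpos : ∀ x : ι → ℝ, x ≠ 0 → 0 < eval x (homogeneousComponent p.totalDegree p)) :
    Tendsto (fun x => eval x p) (cocompact (ι → ℝ)) atTop := by
  set n := p.totalDegree
  set F := homogeneousComponent n p
  obtain ⟨c, hc, hF⟩ := (homogeneousComponent_isHomogeneous n p).exists_mul_norm_pow_le_eval hpos
  set C := ∑ e ∈ (p - F).support, |(p - F).coeff e|
  have hnorm := tendsto_norm_cocompact_atTop (E := ι → ℝ)
  refine tendsto_atTop_mono' _ ?_ (tendsto_atTop_add_const_right _ (-C) (hnorm.const_mul_atTop hc))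
  filter_upwards [hnorm.eventually (eventually_ge_atTop (max 1 (C / c)))] with x hx
  have hr1 : 1 ≤ ‖x‖ := le_of_max_le_left hx
  have hrC : C ≤ c * ‖x‖ := (div_le_iff₀' hc).mp (le_of_max_le_right hx)
  have hx0 : x ≠ 0 := norm_pos_iff.mp (by linarith)
  have hlow : -(C * ‖x‖ ^ (n - 1)) ≤ eval x (p - F) :=
    (neg_le_neg (abs_eval_le_of_one_le_norm (totalDegree_sub_homogeneousComponent_le p) hr1)).trans
      (neg_abs_le _)
  obtain ⟨k, hk⟩ : ∃ k, n = k + 1 := ⟨n - 1, by omega⟩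
  calc c * ‖x‖ + -C ≤ ‖x‖ ^ k * (c * ‖x‖ - C) :=
        le_mul_of_one_le_left (by linarith) (one_le_pow₀ hr1)
    _ = c * ‖x‖ ^ n - C * ‖x‖ ^ (n - 1) := by rw [hk, Nat.add_sub_cancel, pow_succ]; ring
    _ ≤ eval x F + eval x (p - F) := by linarith [hF x hx0, hlow]
    _ = eval x p := by rw [eval_sub, add_sub_cancel]

end MvPolynomial

theorem bddBelow_of_star_condition_general (d : ℕ) (f : MvPolynomial (Fin d) ℝ)
    (hhom : ∀ x : Fin d → ℝ, x ≠ 0 →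
      0 < eval x (homogeneousComponent f.totalDegree f)) :
    ∃ μ : ℝ, ∀ x : Fin d → ℝ, μ ≤ eval x f := by
  rcases Nat.eq_zero_or_pos f.totalDegree with hconst | hpos
  · refine ⟨eval 0 f, fun x => ?_⟩
    rw [totalDegree_eq_zero_iff_eq_C.mp hconst, eval_C, eval_C]
  · obtain ⟨x₀, hx₀⟩ := (continuous_eval f).exists_forall_le (tendsto_eval_cocompact_atTop hpos hhom)
    exact ⟨eval x₀ f, hx₀⟩

/-- Condition (*): if `f` has even total degree `2*m` and its top homogeneous part is
positive away from the origin, then `f` is bounded from below on `ℝ^d`. -/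
theorem bddBelow_of_star_condition (d m : ℕ) (f : MvPolynomial (Fin d) ℝ)
    (hdeg : f.totalDegree = 2 * m)
    (hhom : ∀ x : Fin d → ℝ, x ≠ 0 →
      0 < eval x (homogeneousComponent f.totalDegree f)) :
    ∃ μ : ℝ, ∀ x : Fin d → ℝ, μ ≤ eval x f :=
  bddBelow_of_star_condition_general d f hhom
end

section
/- Let f be a nonconstant real polynomial in d variables that is bounded from below on ℝ^d, and let n be its total degree. Then n is even and the degree-n homogeneous part f_n satisfies f_n(x) ≥ 0 for every x ∈ ℝ^d. -/
/-!
On the line through `x`, `f` restricts to the univariate polynomial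
`t ↦ f (t • x) = ∑ₖ fₖ(x) tᵏ`, which is bounded below. When `fₙ(x) ≠ 0` it has degree
`n > 0` and leading coefficient `fₙ(x)`, which therefore has to be positive. As `fₙ ≠ 0`,
some `x₀` has `fₙ(x₀) ≠ 0`; then `fₙ(x₀)` and `fₙ(-x₀) = (-1)ⁿ fₙ(x₀)` are both positive,
so `n` is even.
-/

open MvPolynomial

theorem Polynomial.leadingCoeff_pos_of_bddBelow {P : Polynomial ℝ} (hdeg : 0 < P.degree)
    (hP : BddBelow (Set.range fun t => P.eval t)) : 0 < P.leadingCoeff := by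
  by_contra! hle
  exact Filter.not_bddBelow_of_tendsto_atBot (P.tendsto_atBot_of_leadingCoeff_nonpos hdeg hle) hP

namespace MvPolynomial

variable {σ R : Type*} [CommSemiring R]

theorem IsHomogeneous.eval_smul_s5 {φ : MvPolynomial σ R} {n : ℕ} (hφ : φ.IsHomogeneous n)
    (t : R) (x : σ → R) : eval (t • x) φ = t ^ n * eval x φ := by
  simp only [eval_eq, Finset.mul_sum]
  refine Finset.sum_congr rfl fun m hm => ?_
  simp only [Pi.smul_apply, smul_eq_mul, mul_pow, Finset.prod_mul_distrib,
    Finset.prod_pow_eq_pow_sum, ← hφ.degree_eq_sum_deg_support hm]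
  ring

theorem IsHomogeneous.eval_neg {R : Type*} [CommRing R] {φ : MvPolynomial σ R} {n : ℕ}
    (hφ : φ.IsHomogeneous n) (x : σ → R) : eval (-x) φ = (-1) ^ n * eval x φ := by
  rw [← neg_one_smul R x, hφ.eval_smul_s5]

theorem homogeneousComponent_totalDegree_ne_zero {f : MvPolynomial σ R} (hf : f ≠ 0) :
    homogeneousComponent f.totalDegree f ≠ 0 := by
  obtain ⟨m, hm, hmax⟩ := Finset.exists_mem_eq_sup f.support (support_nonempty.mpr hf)
    fun m => m.sum fun _ e => e
  have hdeg : m.degree = f.totalDegree := hmax.symm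
  refine ne_of_apply_ne (coeff m) ?_
  rw [coeff_homogeneousComponent, if_pos hdeg, coeff_zero]
  exact mem_support_iff.mp hm

/-- The restriction `t ↦ f (t • x)` of `f` to the line through `x`. -/
noncomputable def restrictToLine (f : MvPolynomial σ R) (x : σ → R) : Polynomial R :=
  ∑ k ∈ Finset.range (f.totalDegree + 1),
    Polynomial.monomial k (eval x (homogeneousComponent k f))

section restrictToLine

variable (f : MvPolynomial σ R) (x : σ → R)

theorem coeff_restrictToLine (k : ℕ) :
    (restrictToLine f x).coeff k = eval x (homogeneousComponent k f) := by
  simp only [restrictToLine, Polynomial.finsetSum_coeff, Polynomial.coeff_monomial,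
    Finset.sum_ite_eq', Finset.mem_range]
  split_ifs with hk
  · rfl
  · rw [homogeneousComponent_eq_zero _ _ (by omega), map_zero]

theorem eval_restrictToLine (t : R) : (restrictToLine f x).eval t = eval (t • x) f := by
  conv_rhs => rw [← sum_homogeneousComponent f]
  simp only [restrictToLine, Polynomial.eval_finsetSum, Polynomial.eval_monomial, map_sum,
    (homogeneousComponent_isHomogeneous _ f).eval_smul_s5, mul_comm]

theorem natDegree_restrictToLine_le : (restrictToLine f x).natDegree ≤ f.totalDegree :=
  Polynomial.natDegree_le_iff_coeff_eq_zero.mpr fun k hk => by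
    rw [coeff_restrictToLine, homogeneousComponent_eq_zero _ _ (by exact_mod_cast hk), map_zero]

theorem natDegree_restrictToLine (hx : eval x (homogeneousComponent f.totalDegree f) ≠ 0) :
    (restrictToLine f x).natDegree = f.totalDegree :=
  Polynomial.natDegree_eq_of_le_of_coeff_ne_zero (natDegree_restrictToLine_le f x)
    (by rwa [coeff_restrictToLine])

theorem leadingCoeff_restrictToLine (hx : eval x (homogeneousComponent f.totalDegree f) ≠ 0) :
    (restrictToLine f x).leadingCoeff = eval x (homogeneousComponent f.totalDegree f) := by
  rw [Polynomial.leadingCoeff, natDegree_restrictToLine f x hx, coeff_restrictToLine]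

end restrictToLine

theorem eval_homogeneousComponent_totalDegree_pos {f : MvPolynomial σ ℝ} (hf : 0 < f.totalDegree)
    (hbdd : BddBelow (Set.range fun x => eval x f)) {x : σ → ℝ}
    (hx : eval x (homogeneousComponent f.totalDegree f) ≠ 0) :
    0 < eval x (homogeneousComponent f.totalDegree f) := by
  have hdeg : 0 < (restrictToLine f x).degree :=
    Polynomial.natDegree_pos_iff_degree_pos.mp (by rwa [natDegree_restrictToLine f x hx])
  have hline : BddBelow (Set.range fun t => (restrictToLine f x).eval t) :=
    hbdd.mono <| by rintro _ ⟨t, rfl⟩; exact ⟨t • x, (eval_restrictToLine f x t).symm⟩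
  rw [← leadingCoeff_restrictToLine f x hx]
  exact Polynomial.leadingCoeff_pos_of_bddBelow hdeg hline

end MvPolynomial

/-- A necessary condition: if a nonconstant polynomial `f` is bounded from below
on `ℝ^d`, then its total degree is even and its top homogeneous part is
nonnegative everywhere. -/
theorem even_degree_and_nonneg_top_of_bddBelow (d : ℕ) (f : MvPolynomial (Fin d) ℝ)
    (hnc : 0 < f.totalDegree)
    (hbdd : ∃ μ : ℝ, ∀ x : Fin d → ℝ, μ ≤ eval x f) :
    Even f.totalDegree ∧
      ∀ x : Fin d → ℝ, 0 ≤ eval x (homogeneousComponent f.totalDegree f) := by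
  set fₙ := homogeneousComponent f.totalDegree f
  obtain ⟨μ, hμ⟩ := hbdd
  have hpos {x} : eval x fₙ ≠ 0 → 0 < eval x fₙ :=
    eval_homogeneousComponent_totalDegree_pos hnc ⟨μ, by rintro _ ⟨x, rfl⟩; exact hμ x⟩
  have hf : f ≠ 0 := by rintro rfl; simp at hnc
  obtain ⟨x₀, hx₀⟩ : ∃ x₀, eval x₀ fₙ ≠ 0 := by
    by_contra! h
    exact homogeneousComponent_totalDegree_ne_zero hf
      (MvPolynomial.funext fun x => (h x).trans (map_zero _).symm)
  have hneg : eval (-x₀) fₙ = (-1) ^ f.totalDegree * eval x₀ fₙ :=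
    (homogeneousComponent_isHomogeneous _ f).eval_neg x₀
  refine ⟨?_, fun x => ?_⟩
  · by_contra hodd
    have hneg_pos := hpos (x := -x₀) (by simp [hneg, hx₀])
    rw [hneg, (Nat.not_even_iff_odd.mp hodd).neg_one_pow] at hneg_pos
    linarith [hpos hx₀]
  · rcases eq_or_ne (eval x fₙ) 0 with h | h
    exacts [h.ge, (hpos h).le]
end

section
/- For nonzero real polynomials f and g in d variables, the Newton polytope of the product satisfies N(fg) = N(f) + N(g), where the right-hand side is the Minkowski sum of the two polytopes in ℝ^d. -/
/-!
A vertex `v` of `N(f) + N(g)` decomposes in exactly one way as `a + b` with `a ∈ N(f)`,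
`b ∈ N(g)`: otherwise `v` would be the midpoint of two other points of the sum. Hence the monomial
`X^v` arises in exactly one way in the expansion of `f * g`, its coefficient is a product of two
nonzero coefficients, and `v` lies in the support of `f * g`. So `N(f) + N(g)`, the convex hull of
its vertices, is contained in `N(fg)`; the other inclusion is `supp (fg) ⊆ supp f + supp g`.
-/

open MvPolynomial Pointwise

/-- The Newton polytope of a polynomial: the convex hull in `ℝ^d` of its support. -/
noncomputable def newtonPolytope {d : ℕ} (f : MvPolynomial (Fin d) ℝ) :
    Set (Fin d → ℝ) :=
  convexHull ℝ ((fun α : Fin d →₀ ℕ => fun i => (α i : ℝ)) '' ↑f.support)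

section Convex

variable {𝕜 E : Type*} [Field 𝕜] [LinearOrder 𝕜] [IsStrictOrderedRing 𝕜]
  [AddCommGroup E] [Module 𝕜 E]

theorem eq_and_eq_of_add_mem_extremePoints_add {K L : Set E} {a a' b b' : E}
    (h : a + b ∈ (K + L).extremePoints 𝕜) (ha : a ∈ K) (ha' : a' ∈ K) (hb : b ∈ L)
    (hb' : b' ∈ L) (hsum : a' + b' = a + b) : a' = a ∧ b' = b := by
  -- `a + b` is the midpoint of `a + b'` and `a' + b`, both of which lie in `K + L`.
  have hmid : a + b ∈ openSegment 𝕜 (a + b') (a' + b) := by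
    refine ⟨2⁻¹, 2⁻¹, by norm_num, by norm_num, by norm_num, ?_⟩
    calc (2⁻¹ : 𝕜) • (a + b') + (2⁻¹ : 𝕜) • (a' + b)
        = (2⁻¹ : 𝕜) • (a + b) + (2⁻¹ : 𝕜) • (a' + b') := by module
      _ = a + b := by rw [hsum, ← add_smul]; norm_num
  have hb'b : b' = b :=
    add_left_cancel (h.2 (Set.add_mem_add ha hb') (Set.add_mem_add ha' hb) hmid)
  subst hb'b
  exact ⟨add_right_cancel hsum, rfl⟩

end Convex

theorem Set.Finite.convexHull_extremePoints_convexHull {E : Type*} [AddCommGroup E]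
    [Module ℝ E] [TopologicalSpace E] [T2Space E] [IsTopologicalAddGroup E]
    [ContinuousSMul ℝ E] [LocallyConvexSpace ℝ E] {s : Set E} (hs : s.Finite) :
    convexHull ℝ ((convexHull ℝ s).extremePoints ℝ) = convexHull ℝ s := by
  have hext : ((convexHull ℝ s).extremePoints ℝ).Finite :=
    hs.subset extremePoints_convexHull_subset
  rw [← (hext.isClosed_convexHull ℝ).closure_eq]
  exact closure_convexHull_extremePoints (hs.isCompact_convexHull ℝ) (convex_convexHull ℝ s)

namespace MvPolynomial

variable {σ R : Type*} [CommSemiring R]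

def exponentVector : (σ →₀ ℕ) →+ (σ → ℝ) where
  toFun α i := α i
  map_zero' := by ext; simp
  map_add' α β := by ext; simp

theorem exponentVector_injective : Function.Injective (exponentVector (σ := σ)) :=
  fun _ _ h => Finsupp.ext fun i => Nat.cast_injective (congrFun h i)

theorem extremePoints_convexHull_add_subset_image_support_mul [NoZeroDivisors R]
    (f g : MvPolynomial σ R) :
    (convexHull ℝ (exponentVector '' ↑f.support + exponentVector '' ↑g.support)).extremePoints ℝ ⊆
      exponentVector '' ((f * g).support : Set (σ →₀ ℕ)) := by
  intro v hv
  obtain ⟨_, ⟨α, hα, rfl⟩, _, ⟨β, hβ, rfl⟩, rfl⟩ := extremePoints_convexHull_subset hv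
  rw [convexHull_add] at hv
  have huniq :
      UniqueAdd (AddMonoidAlgebra.coeff f).support (AddMonoidAlgebra.coeff g).support α β := by
    intro α' β' hα' hβ' hsum
    have := eq_and_eq_of_add_mem_extremePoints_add hv
      (subset_convexHull ℝ _ ⟨α, hα, rfl⟩) (subset_convexHull ℝ _ ⟨α', hα', rfl⟩)
      (subset_convexHull ℝ _ ⟨β, hβ, rfl⟩) (subset_convexHull ℝ _ ⟨β', hβ', rfl⟩)
      (by rw [← map_add, ← map_add, hsum])
    exact ⟨exponentVector_injective this.1, exponentVector_injective this.2⟩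
  refine ⟨α + β, ?_, map_add _ _ _⟩
  rw [Finset.mem_coe, mem_support_iff]
  exact (AddMonoidAlgebra.coeff_mul_add_of_uniqueAdd huniq).trans_ne
    (mul_ne_zero (mem_support_iff.1 hα) (mem_support_iff.1 hβ))

end MvPolynomial

theorem newtonPolytope_mul_general {d : ℕ} (f g : MvPolynomial (Fin d) ℝ) :
    newtonPolytope (f * g) = newtonPolytope f + newtonPolytope g := by
  change convexHull ℝ (exponentVector '' _) =
    convexHull ℝ (exponentVector '' _) + convexHull ℝ (exponentVector '' _)
  rw [← convexHull_add]
  apply subset_antisymm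
  · refine convexHull_mono ?_
    rw [← Set.image_add, ← Finset.coe_add]
    exact Set.image_mono (support_mul f g)
  · have hfin : (exponentVector '' (f.support : Set (Fin d →₀ ℕ)) +
        exponentVector '' (g.support : Set (Fin d →₀ ℕ))).Finite :=
      (f.support.finite_toSet.image _).add (g.support.finite_toSet.image _)
    rw [← hfin.convexHull_extremePoints_convexHull]
    exact convexHull_mono (extremePoints_convexHull_add_subset_image_support_mul f g)

/-- For nonzero polynomials `f`, `g`, the Newton polytope of the product is the
Minkowski sum of the Newton polytopes: `N(fg) = N(f) + N(g)`. -/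
theorem newtonPolytope_mul {d : ℕ} (f g : MvPolynomial (Fin d) ℝ)
    (hf : f ≠ 0) (hg : g ≠ 0) :
    newtonPolytope (f * g) = newtonPolytope f + newtonPolytope g :=
  newtonPolytope_mul_general f g
end

section
/- The Motzkin polynomial 1 + x_1^2 x_2^4 + x_1^4 x_2^2 − 3 x_1^2 x_2^2 satisfies 1 + x_1^2 x_2^4 + x_1^4 x_2^2 − 3 x_1^2 x_2^2 ≥ 0 for all (x_1, x_2) ∈ ℝ^2. -/
open MvPolynomial

/-- The Motzkin polynomial `1 + X₁²X₂⁴ + X₁⁴X₂² - 3X₁²X₂²` is nonnegative on `ℝ²`. -/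
theorem motzkin_nonneg :
    ∀ x : Fin 2 → ℝ,
      0 ≤ eval x (1 + (X 0) ^ 2 * (X 1) ^ 4 + (X 0) ^ 4 * (X 1) ^ 2
        - 3 * (X 0) ^ 2 * (X 1) ^ 2 : MvPolynomial (Fin 2) ℝ) := by
  intro x
  simp only [map_add, map_sub, map_mul, map_pow, map_one, eval_X, map_ofNat]
  set t : ℝ := |x 0 * x 1| with ht
  have ht0 : 0 ≤ t := abs_nonneg _
  have ht2 : t ^ 2 = (x 0) ^ 2 * (x 1) ^ 2 := by
    rw [ht, sq_abs, mul_pow]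
  have h1 : 2 * t ≤ (x 0) ^ 2 + (x 1) ^ 2 := by
    rcases abs_cases (x 0 * x 1) with ⟨h, _⟩ | ⟨h, _⟩ <;> rw [ht, h] <;>
      nlinarith [sq_nonneg (x 0 - x 1), sq_nonneg (x 0 + x 1)]
  have h2 : 0 ≤ (t - 1) ^ 2 * (2 * t + 1) := by positivity
  have h3 : 0 ≤ t ^ 2 * ((x 0) ^ 2 + (x 1) ^ 2 - 2 * t) := by
    apply mul_nonneg (sq_nonneg t); linarith
  nlinarith [h2, h3, ht2]
end

section
/- The Motzkin polynomial 1 + X_1^2 X_2^4 + X_1^4 X_2^2 − 3 X_1^2 X_2^2 is not a sum of squares of real polynomials: there exist no polynomials g_1, ..., g_r ∈ ℝ[X_1, X_2] with 1 + X_1^2 X_2^4 + X_1^4 X_2^2 − 3 X_1^2 X_2^2 = g_1^2 + ... + g_r^2. -/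
/-!
View the Motzkin polynomial in `ℝ[y][x]` as `1 + (y⁴ - 3y²) x² + y² x⁴`. Over a formally real
ring the leading coefficients of a sum of squares cannot cancel, so if it equals `∑ gᵢ²` then
`gᵢ = aᵢ + bᵢ x + cᵢ x²` with `aᵢ, bᵢ, cᵢ ∈ ℝ[y]`. The coefficients of `x⁰` and `x⁴` give
`∑ aᵢ² = 1` and `∑ cᵢ² = y²`, so every `aᵢ` is constant and every `cᵢ` is a multiple of `y`.
The coefficient of `x²` is then `∑ bᵢ² = y⁴ - 3y² - 2 ∑ aᵢcᵢ`, whose right side vanishes at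
`y = 0`; hence so does every `bᵢ`, and comparing coefficients of `y²` gives
`∑ bᵢ'(0)² = -3`.
-/

theorem IsSumSq.map {R S F : Type*} [NonUnitalNonAssocSemiring R] [NonUnitalNonAssocSemiring S]
    [FunLike F R S] [NonUnitalRingHomClass F R S] (f : F) {s : R} (hs : IsSumSq s) :
    IsSumSq (f s) := by
  induction hs with
  | zero => simp
  | sq_add a _ ih => simpa using IsSumSq.sq_add (f a) ih

theorem IsFormallyReal.eq_zero_of_sum_sq_eq_zero {R ι : Type*} [CommRing R] [IsFormallyReal R]
    {s : Finset ι} {f : ι → R} (h : ∑ j ∈ s, f j ^ 2 = 0) {i : ι} (hi : i ∈ s) : f i = 0 := by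
  classical
  rw [← Finset.add_sum_erase s _ hi] at h
  exact IsNilpotent.eq_zero ⟨2, eq_zero_of_add_right (IsSquare.sq _).isSumSq (.sum_sq _ _) h⟩

namespace Polynomial

variable {R ι : Type*} [CommRing R]

instance [IsDomain R] [Infinite R] [IsFormallyReal R] : IsFormallyReal R[X] :=
  .of_eq_zero_of_eq_zero_of_mul_self_add fun {s a} hs h => funext fun x => by
    have h' : eval x a * eval x a + eval x s = 0 := by simpa using congrArg (eval x) h
    simpa using IsFormallyReal.eq_zero_of_add_right (.mul_self _) (hs.map (evalRingHom x)) h'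

theorem coeff_sq_two (p : R[X]) :
    (p ^ 2).coeff 2 = 2 * p.coeff 0 * p.coeff 2 + p.coeff 1 ^ 2 := by
  rw [sq, coeff_mul, Finset.Nat.sum_antidiagonal_eq_sum_range_succ_mk]
  simp only [Finset.sum_range_succ, Finset.sum_range_zero]
  ring

theorem two_mul_natDegree_le_natDegree_sum_sq [IsFormallyReal R] {s : Finset ι} (f : ι → R[X])
    {i : ι} (hi : i ∈ s) : 2 * (f i).natDegree ≤ (∑ j ∈ s, f j ^ 2).natDegree := by
  obtain ⟨k, hk, hkN⟩ := s.exists_mem_eq_sup ⟨i, hi⟩ (natDegree ∘ f)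
  set N := s.sup (natDegree ∘ f)
  replace hkN : N = (f k).natDegree := hkN
  have hle : ∀ j ∈ s, (f j).natDegree ≤ N := fun j hj => Finset.le_sup (f := natDegree ∘ f) hj
  rcases Nat.eq_zero_or_pos N with hN | hN
  · simp [Nat.le_zero.mp (hN ▸ hle i hi)]
  have htop : (∑ j ∈ s, f j ^ 2).coeff (2 * N) = ∑ j ∈ s, (f j).coeff N ^ 2 := by
    rw [finsetSum_coeff]
    exact Finset.sum_congr rfl fun j hj => coeff_pow_of_natDegree_le (hle j hj)
  have hfk : (f k).coeff N ≠ 0 := by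
    rw [hkN]
    exact leadingCoeff_ne_zero.mpr (ne_zero_of_natDegree_gt (hkN ▸ hN))
  calc 2 * (f i).natDegree ≤ 2 * N := by gcongr; exact hle i hi
    _ ≤ _ := le_natDegree_of_ne_zero fun h =>
      hfk (IsFormallyReal.eq_zero_of_sum_sq_eq_zero (f := fun j => (f j).coeff N) (htop ▸ h) hk)

theorem coeff_two_sum_sq_nonneg [LinearOrder R] [IsStrictOrderedRing R] (s : Finset ι)
    (q : ι → R[X]) (h0 : (∑ i ∈ s, q i ^ 2).coeff 0 = 0) :
    0 ≤ (∑ i ∈ s, q i ^ 2).coeff 2 := by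
  rw [← constantCoeff_apply, map_sum] at h0
  simp only [map_pow] at h0
  rw [finsetSum_coeff]
  refine Finset.sum_nonneg fun i hi => ?_
  have hqi : (q i).coeff 0 = 0 := IsFormallyReal.eq_zero_of_sum_sq_eq_zero h0 hi
  simp [coeff_sq_two, hqi, sq_nonneg]

theorem sum_sq_ne_X_pow_four_sub_three_mul_X_sq_sub {ι : Type*} (s : Finset ι)
    (a b c : ι → ℝ[X]) (ha : ∑ i ∈ s, a i ^ 2 = 1) (hc : ∑ i ∈ s, c i ^ 2 = X ^ 2) :
    ∑ i ∈ s, b i ^ 2 ≠ X ^ 4 - 3 * X ^ 2 - 2 * ∑ i ∈ s, a i * c i := by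
  intro hb
  have ha_deg : ∀ i ∈ s, (a i).natDegree = 0 := fun i hi => by
    have h := two_mul_natDegree_le_natDegree_sum_sq a hi
    rw [ha, natDegree_one] at h
    omega
  have hc_deg : ∀ i ∈ s, (c i).natDegree ≤ 1 := fun i hi => by
    have h := two_mul_natDegree_le_natDegree_sum_sq c hi
    rw [hc, natDegree_X_pow] at h
    omega
  have hc_coeff_zero : ∀ i ∈ s, (c i).coeff 0 = 0 := by
    have h := congrArg constantCoeff hc
    simp only [map_sum, map_pow, constantCoeff_apply] at h
    exact fun i hi => IsFormallyReal.eq_zero_of_sum_sq_eq_zero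
      (f := fun i => (c i).coeff 0) (by simpa using h) hi
  set q := ∑ i ∈ s, a i * c i
  have hq_deg : q.natDegree ≤ 1 := natDegree_sum_le_of_forall_le _ _ fun i hi =>
    natDegree_mul_le.trans (by have := ha_deg i hi; have := hc_deg i hi; omega)
  have hq_coeff_zero : q.coeff 0 = 0 := by
    simp only [q, finsetSum_coeff, mul_coeff_zero]
    exact Finset.sum_eq_zero fun i hi => by rw [hc_coeff_zero i hi, mul_zero]
  have h := coeff_two_sum_sq_nonneg s b (by rw [hb]; simp [hq_coeff_zero])
  rw [hb] at h
  norm_num [coeff_X_pow, coeff_eq_zero_of_natDegree_lt (hq_deg.trans_lt one_lt_two)] at h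

end Polynomial

open scoped Polynomial.Bivariate

namespace Polynomial.Bivariate

noncomputable def motzkin : ℝ[X][Y] :=
  1 + C (X ^ 4 - 3 * X ^ 2) * Y ^ 2 + C (X ^ 2) * Y ^ 4

theorem natDegree_motzkin_le : motzkin.natDegree ≤ 4 := by
  unfold motzkin
  compute_degree!

theorem coeff_motzkin_zero : motzkin.coeff 0 = 1 := by
  simp only [motzkin, coeff_add, coeff_C_mul, coeff_X_pow, coeff_one]; norm_num

theorem coeff_motzkin_two : motzkin.coeff 2 = X ^ 4 - 3 * X ^ 2 := by
  simp only [motzkin, coeff_add, coeff_C_mul, coeff_X_pow, coeff_one]; norm_num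

theorem coeff_motzkin_four : motzkin.coeff 4 = X ^ 2 := by
  simp only [motzkin, coeff_add, coeff_C_mul, coeff_X_pow, coeff_one]; norm_num

theorem sum_sq_ne_motzkin {ι : Type*} (s : Finset ι) (A : ι → ℝ[X][Y]) :
    ∑ i ∈ s, A i ^ 2 ≠ motzkin := by
  intro hA
  have hcoeff (n : ℕ) : ∑ i ∈ s, (A i ^ 2).coeff n = motzkin.coeff n := by
    rw [← finsetSum_coeff, hA]
  have hdeg : ∀ i ∈ s, (A i).natDegree ≤ 2 := fun i hi => by
    have h := two_mul_natDegree_le_natDegree_sum_sq A hi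
    rw [hA] at h
    have := natDegree_motzkin_le
    omega
  refine sum_sq_ne_X_pow_four_sub_three_mul_X_sq_sub s (fun i => (A i).coeff 0)
    (fun i => (A i).coeff 1) (fun i => (A i).coeff 2) ?_ ?_ ?_
  · rw [← coeff_motzkin_zero, ← hcoeff 0]
    simp only [sq, mul_coeff_zero]
  · rw [← coeff_motzkin_four, ← hcoeff (2 * 2)]
    exact Finset.sum_congr rfl fun i hi => (coeff_pow_of_natDegree_le (hdeg i hi)).symm
  · rw [eq_sub_iff_add_eq, add_comm, ← coeff_motzkin_two, ← hcoeff 2, Finset.mul_sum]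
    simp only [coeff_sq_two, Finset.sum_add_distrib, mul_assoc]

end Polynomial.Bivariate

open MvPolynomial

theorem aeval_motzkin :
    aeval (![Y, Polynomial.C Polynomial.X] : Fin 2 → ℝ[X][Y])
      (1 + X 0 ^ 2 * X 1 ^ 4 + X 0 ^ 4 * X 1 ^ 2 - 3 * X 0 ^ 2 * X 1 ^ 2 : MvPolynomial (Fin 2) ℝ)
      = Polynomial.Bivariate.motzkin := by
  simp [Polynomial.Bivariate.motzkin, map_ofNat]
  ring

/-- The Motzkin polynomial `1 + X₁²X₂⁴ + X₁⁴X₂² - 3X₁²X₂²` is not a sum of squares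
of real polynomials. -/
theorem motzkin_not_sos :
    ¬ ∃ (r : ℕ) (g : Fin r → MvPolynomial (Fin 2) ℝ),
      (1 + (X 0) ^ 2 * (X 1) ^ 4 + (X 0) ^ 4 * (X 1) ^ 2
        - 3 * (X 0) ^ 2 * (X 1) ^ 2 : MvPolynomial (Fin 2) ℝ)
        = ∑ i : Fin r, (g i) ^ 2 := by
  rintro ⟨r, g, hg⟩
  refine Polynomial.Bivariate.sum_sq_ne_motzkin Finset.univ
    (fun i => aeval (![Y, Polynomial.C Polynomial.X] : Fin 2 → ℝ[X][Y]) (g i)) ?_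
  rw [← aeval_motzkin, hg, map_sum]
  simp only [map_pow]
end

section
/- Let a > 0 and b > −1/4 be real numbers. For every smooth function f : ℝ → ℝ whose support is compact and contained in the open interval (0, ∞), one has ∫₀^∞ ( f'(r)² + (a r² + b/r²) f(r)² ) dr ≥ 2√a · (1 + √(b + 1/4)) · ∫₀^∞ f(r)² dr. -/
open MeasureTheory Set Filter

/-- Lower bound for the quadratic form of `-d²/dr² + a r² + b/r²` on `(0,∞)`:
for smooth `f` compactly supported in `(0,∞)`,
`∫ (f'² + (a r² + b/r²) f²) ≥ 2√a (1 + √(b+1/4)) ∫ f²`. -/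
theorem schroedinger_quadratic_form_bound_quadratic (a b : ℝ)
    (ha : 0 < a) (hb : -(1/4 : ℝ) < b)
    (f : ℝ → ℝ) (hf : ContDiff ℝ (⊤ : ℕ∞) f) (hsupp : HasCompactSupport f)
    (hsupp' : tsupport f ⊆ Set.Ioi (0 : ℝ)) :
    ∫ r in Set.Ioi (0 : ℝ), (deriv f r ^ 2 + (a * r ^ 2 + b / r ^ 2) * f r ^ 2)
      ≥ 2 * Real.sqrt a * (1 + Real.sqrt (b + 1/4))
          * ∫ r in Set.Ioi (0 : ℝ), f r ^ 2 := by
  -- notation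
  set α := Real.sqrt a with hαdef
  set β := Real.sqrt (b + 1/4) with hβdef
  have hα : 0 < α := Real.sqrt_pos.mpr ha
  have hα2 : α ^ 2 = a := Real.sq_sqrt ha.le
  have hβ2 : β ^ 2 = b + 1/4 := Real.sq_sqrt (by linarith)
  have hβ0 : 0 ≤ β := Real.sqrt_nonneg _
  set c : ℝ := β + 1/2 with hcdef
  set lam : ℝ := 2 * α * (1 + β) with hlamdef
  -- f vanishes on a neighborhood of (-∞, 0]
  obtain ⟨ε, hε, hεf⟩ : ∃ ε > 0, ∀ r < ε, f r = 0 := by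
    have h0 : (0:ℝ) ∉ tsupport f := fun h => lt_irrefl 0 (Set.mem_Ioi.mp (hsupp' h))
    obtain ⟨ε, hε, hball⟩ := Metric.mem_nhds_iff.mp
      ((isClosed_tsupport f).isOpen_compl.mem_nhds h0)
    refine ⟨ε, hε, fun r hr => ?_⟩
    rcases le_or_gt r 0 with hr0 | hr0
    · exact image_eq_zero_of_notMem_tsupport fun h => absurd (hsupp' h) (not_lt.mpr hr0)
    · refine image_eq_zero_of_notMem_tsupport (hball ?_)
      simp [Metric.mem_ball, Real.dist_eq, abs_of_pos hr0, hr]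
  have hfd : ∀ x, HasDerivAt f (deriv f x) x :=
    fun x => ((hf.differentiable (by simp)) x).hasDerivAt
  have hderiv0 : ∀ r < ε, deriv f r = 0 := by
    intro r hr
    have hev : f =ᶠ[nhds r] (fun _ => (0:ℝ)) := by
      filter_upwards [Iio_mem_nhds hr] with y hy using hεf y hy
    rw [hev.deriv_eq]
    exact deriv_const r 0
  -- the superpotential and auxiliary functions
  set W : ℝ → ℝ := fun r => α * r - c / r with hWdef
  set g : ℝ → ℝ := fun r => W r * f r ^ 2 with hgdef
  set G : ℝ → ℝ := fun r => (α + c / r ^ 2) * f r ^ 2 + W r * (2 * f r * deriv f r)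
    with hGdef
  set h : ℝ → ℝ := fun r => deriv f r + W r * f r with hhdef
  -- g has derivative G everywhere
  have hgd : ∀ x, HasDerivAt g (G x) x := by
    intro x
    rcases lt_or_ge 0 x with hx | hx
    · have hx0 : x ≠ 0 := ne_of_gt hx
      have hW : HasDerivAt W (α + c / x ^ 2) x := by
        have h1 : HasDerivAt (fun r : ℝ => α * r) α x := by
          simpa using (hasDerivAt_id x).const_mul α
        have h2 : HasDerivAt (fun r : ℝ => c / r) (c * -(x ^ 2)⁻¹) x := by
          simpa [div_eq_mul_inv] using (hasDerivAt_inv hx0).const_mul c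
        have := h1.fun_sub h2
        convert this using 1
        all_goals first | rfl | ring
      have hF : HasDerivAt (fun r => f r ^ 2) (2 * f x * deriv f x) x := by
        simpa [mul_comm, mul_assoc, mul_left_comm] using (hfd x).fun_pow 2
      simpa [hGdef] using hW.fun_mul hF
    · have hxε : x < ε := lt_of_le_of_lt hx hε
      have hev : g =ᶠ[nhds x] (fun _ => (0:ℝ)) := by
        filter_upwards [Iio_mem_nhds hxε] with y hy
        simp [hgdef, hεf y hy]
      have hG0 : G x = 0 := by simp [hGdef, hεf x hxε]
      rw [hG0]
      exact (hasDerivAt_const x (0:ℝ)).congr_of_eventuallyEq hev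
  -- compact supports
  have hcs_f2 : HasCompactSupport (fun r => f r ^ 2) :=
    hsupp.mono (fun x hx => by intro hfx; apply hx; simp [hfx])
  have hcs_g : HasCompactSupport g :=
    hsupp.mono (fun x hx => by intro hfx; apply hx; simp [hgdef, hfx])
  have hcs_G : HasCompactSupport G :=
    hsupp.mono (fun x hx => by intro hfx; apply hx; simp [hGdef, hfx])
  have hcs_wf : HasCompactSupport (fun r => W r * f r) :=
    hsupp.mono (fun x hx => by intro hfx; apply hx; simp [hfx])
  have hcs_h : HasCompactSupport h :=
    (hsupp.deriv.add hcs_wf).mono (fun x hx => hx)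
  have hcs_h2 : HasCompactSupport (fun r => h r ^ 2) :=
    hcs_h.mono (fun x hx => by intro hhx; apply hx; simp [hhx])
  have hcs_df2 : HasCompactSupport (fun r => deriv f r ^ 2) :=
    hsupp.deriv.mono (fun x hx => by intro hfx; apply hx; simp [hfx])
  have hcs_p : HasCompactSupport (fun r => (a * r ^ 2 + b / r ^ 2) * f r ^ 2) :=
    hsupp.mono (fun x hx => by intro hfx; apply hx; simp [hfx])
  -- continuity helpers: functions smooth on (0,∞) and vanishing below ε are continuous
  have hcont_aux : ∀ (F : ℝ → ℝ), (∀ y < ε, F y = 0) →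
      (∀ x, 0 < x → ContinuousAt F x) → Continuous F := by
    intro F hF0 hFc
    rw [continuous_iff_continuousAt]
    intro x
    rcases lt_or_ge 0 x with hx | hx
    · exact hFc x hx
    · have hxε : x < ε := lt_of_le_of_lt hx hε
      have hev : F =ᶠ[nhds x] (fun _ => (0:ℝ)) := by
        filter_upwards [Iio_mem_nhds hxε] with y hy using hF0 y hy
      exact (continuousAt_const (y := (0:ℝ))).congr hev.symm
  have hfc : Continuous f := hf.continuous
  have hdfc : Continuous (deriv f) := hf.continuous_deriv (by simp)
  have hWc : ∀ x : ℝ, 0 < x → ContinuousAt W x := by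
    intro x hx
    exact ((continuousAt_const.mul continuousAt_id).sub
      (continuousAt_const.div continuousAt_id (ne_of_gt hx)))
  -- continuity of the pieces
  have hcont_G : Continuous G := by
    refine hcont_aux G (fun y hy => by simp [hGdef, hεf y hy]) (fun x hx => ?_)
    have hx2 : (x:ℝ) ^ 2 ≠ 0 := pow_ne_zero 2 (ne_of_gt hx)
    exact ((continuousAt_const.add (continuousAt_const.div (continuousAt_id.pow 2) hx2)).mul
        ((hfc.continuousAt).pow 2)).add
      ((hWc x hx).mul ((continuousAt_const.mul hfc.continuousAt).mul hdfc.continuousAt))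
  have hcont_h : Continuous h := by
    refine hcont_aux h (fun y hy => by simp [hhdef, hεf y hy, hderiv0 y hy]) (fun x hx => ?_)
    exact hdfc.continuousAt.add ((hWc x hx).mul hfc.continuousAt)
  have hcont_p : Continuous (fun r => (a * r ^ 2 + b / r ^ 2) * f r ^ 2) := by
    refine hcont_aux _ (fun y hy => by simp [hεf y hy]) (fun x hx => ?_)
    have hx2 : (x:ℝ) ^ 2 ≠ 0 := pow_ne_zero 2 (ne_of_gt hx)
    exact ((continuousAt_const.mul (continuousAt_id.pow 2)).add
      (continuousAt_const.div (continuousAt_id.pow 2) hx2)).mul (hfc.continuousAt.pow 2)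
  -- integrability
  have hint_G : Integrable G := hcont_G.integrable_of_hasCompactSupport hcs_G
  have hint_h2 : Integrable (fun r => h r ^ 2) :=
    (hcont_h.pow 2).integrable_of_hasCompactSupport hcs_h2
  have hint_f2 : Integrable (fun r => f r ^ 2) :=
    (hfc.pow 2).integrable_of_hasCompactSupport hcs_f2
  -- the integral of the derivative G vanishes
  have hGzero : ∫ r in Set.Ioi (0:ℝ), G r = 0 := by
    have h1 : ∫ r in Set.Ioi (0:ℝ), G r = ∫ r, G r := by
      refine setIntegral_eq_integral_of_forall_compl_eq_zero (fun x hx => ?_)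
      have hxε : x < ε := lt_of_le_of_lt (not_lt.mp (by simpa using hx)) hε
      simp [hGdef, hεf x hxε]
    have htend : Tendsto g (Filter.cocompact ℝ) (nhds 0) := hcs_g.is_zero_at_infty
    have htop : Tendsto g atTop (nhds 0) := htend.mono_left atTop_le_cocompact
    have hbot : Tendsto g atBot (nhds 0) := htend.mono_left atBot_le_cocompact
    have h2 : ∫ r, G r = 0 - 0 :=
      integral_of_hasDerivAt_of_tendsto hgd hint_G hbot htop
    rw [h1, h2, sub_zero]
  -- pointwise identity on (0, ∞)
  have hpt : ∀ r ∈ Set.Ioi (0:ℝ),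
      deriv f r ^ 2 + (a * r ^ 2 + b / r ^ 2) * f r ^ 2
        = (h r ^ 2 + lam * f r ^ 2) - G r := by
    intro r hr
    have hr0 : (r:ℝ) ≠ 0 := ne_of_gt hr
    have hab : a = α ^ 2 := hα2.symm
    have hbb : b = β ^ 2 - 1/4 := by linarith
    simp only [hhdef, hGdef, hWdef, hlamdef, hcdef]
    rw [hab, hbb]
    field_simp
    ring
  -- put everything together
  have hmain : ∫ r in Set.Ioi (0:ℝ),
      (deriv f r ^ 2 + (a * r ^ 2 + b / r ^ 2) * f r ^ 2)
      = (∫ r in Set.Ioi (0:ℝ), (h r ^ 2 + lam * f r ^ 2)) := by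
    have hint_sum : Integrable (fun r => h r ^ 2 + lam * f r ^ 2) := by
      exact hint_h2.add (hint_f2.const_mul lam)
    rw [setIntegral_congr_fun measurableSet_Ioi hpt,
      integral_sub hint_sum.integrableOn hint_G.integrableOn, hGzero, sub_zero]
  rw [hmain, integral_add hint_h2.integrableOn (hint_f2.const_mul lam).integrableOn,
    integral_const_mul]
  have hh2 : 0 ≤ ∫ r in Set.Ioi (0:ℝ), h r ^ 2 :=
    integral_nonneg (fun r => sq_nonneg _)
  have : lam = 2 * α * (1 + β) := rfl
  nlinarith [hh2]
end

section
/- Let a < 0 and b > −1/4 be real numbers, and set c := 1/2 + √(b + 1/4) and k := a/(1 + 2√(b + 1/4)). For every twice differentiable function f : ℝ → ℝ and every r > 0, defining (h f)(r) := f'(r) − k f(r) − c f(r)/r, one has −(h f)'(r) − k (h f)(r) − c (h f)(r)/r = −f''(r) + (a/r + b/r²) f(r) + (a²/(1 + 2√(b + 1/4))²) f(r). -/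
/-- Operator factorization `-d²/dr² + a/r + b/r² + a²/(1 + 2√(b+1/4))² = h* h` on `(0,∞)`,
where `h = d/dr - a/(1 + 2√(b+1/4)) - (1/2 + √(b+1/4))/r`. -/
theorem schroedinger_factorization_coulomb (a b : ℝ) (ha : a < 0) (hb : -(1/4 : ℝ) < b)
    (c k : ℝ) (hc : c = 1/2 + Real.sqrt (b + 1/4))
    (hk : k = a / (1 + 2 * Real.sqrt (b + 1/4)))
    (f : ℝ → ℝ) (hf : Differentiable ℝ f) (hf' : Differentiable ℝ (deriv f))
    (h : ℝ → ℝ)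
    (hh : ∀ r : ℝ, h r = deriv f r - k * f r - c * f r / r)
    (r : ℝ) (hr : 0 < r) :
    -(deriv h r) - k * h r - c * h r / r
      = -(deriv (deriv f) r) + (a / r + b / r ^ 2) * f r
        + (a ^ 2 / (1 + 2 * Real.sqrt (b + 1/4)) ^ 2) * f r := by
  have hsq : Real.sqrt (b + 1/4) ^ 2 = b + 1/4 := Real.sq_sqrt (by linarith)
  have hsnn : 0 ≤ Real.sqrt (b + 1/4) := Real.sqrt_nonneg _
  have hcpos : 0 < c := by rw [hc]; linarith
  have h2c : 1 + 2 * Real.sqrt (b + 1/4) = 2 * c := by rw [hc]; ring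
  have hka : k * (2 * c) = a := by
    rw [hk, h2c]; field_simp
  have hb' : c ^ 2 - c = b := by rw [hc]; nlinarith [hsq]
  have H : h = fun x => deriv f x - k * f x - c * f x / x := funext hh
  have hd1 : HasDerivAt f (deriv f r) r := (hf r).hasDerivAt
  have hd2 : HasDerivAt (deriv f) (deriv (deriv f) r) r := (hf' r).hasDerivAt
  have hdh : HasDerivAt h
      (deriv (deriv f) r - k * deriv f r - (c * deriv f r * r - c * f r * 1) / r ^ 2) r := by
    rw [H]
    exact (hd2.sub (hd1.const_mul k)).sub ((hd1.const_mul c).div (hasDerivAt_id r) hr.ne')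
  rw [hdh.deriv, hh r, h2c]
  have hr0 : r ≠ 0 := hr.ne'
  have hc0 : c ≠ 0 := hcpos.ne'
  rw [← hka, ← hb']
  field_simp
  ring
end

section
/- Let a < 0 and b > −1/4 be real numbers. For every smooth function f : ℝ → ℝ whose support is compact and contained in the open interval (0, ∞), one has ∫₀^∞ ( f'(r)² + (a/r + b/r²) f(r)² ) dr ≥ −(a²/(1 + 2√(b + 1/4))²) · ∫₀^∞ f(r)² dr. -/
open MeasureTheory

lemma coulomb_aux_identity (α κ a b r d F : ℝ) (h1 : α^2 - α = b) (h2 : 2*α*κ = -a) :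
    d^2 + (a/r + b/r^2)*F^2 + κ^2*F^2
      = (d - (α/r - κ)*F)^2 + ((-α/r^2)*F^2 + (α/r - κ)*(2*F*d)) := by
  linear_combination (-(F^2/r^2)) * h1 + (F^2/r) * h2

lemma coulomb_aux_deriv_u (α κ x : ℝ) (hx : x ≠ 0) :
    HasDerivAt (fun r : ℝ => α / r - κ) (-α/x^2) x := by
  have h := ((hasDerivAt_inv hx).const_mul α).sub_const κ
  have e1 : (fun r : ℝ => α / r - κ) = fun r : ℝ => α * r⁻¹ - κ := by
    funext r; rw [div_eq_mul_inv]
  rw [e1]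
  convert h using 1
  all_goals first | rfl | ring

/-- Lower bound for the quadratic form of `-d²/dr² + a/r + b/r²` on `(0,∞)` with `a < 0`:
for smooth `f` compactly supported in `(0,∞)`,
`∫ (f'² + (a/r + b/r²) f²) ≥ -(a²/(1 + 2√(b+1/4))²) ∫ f²`. -/
theorem schroedinger_quadratic_form_bound_coulomb (a b : ℝ)
    (ha : a < 0) (hb : -(1/4 : ℝ) < b)
    (f : ℝ → ℝ) (hf : ContDiff ℝ (⊤ : ℕ∞) f) (hsupp : HasCompactSupport f)
    (hsupp' : tsupport f ⊆ Set.Ioi (0 : ℝ)) :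
    ∫ r in Set.Ioi (0 : ℝ), (deriv f r ^ 2 + (a / r + b / r ^ 2) * f r ^ 2)
      ≥ -(a ^ 2 / (1 + 2 * Real.sqrt (b + 1/4)) ^ 2)
          * ∫ r in Set.Ioi (0 : ℝ), f r ^ 2 := by
  have hb4 : (0:ℝ) < b + 1/4 := by linarith
  set s : ℝ := Real.sqrt (b + 1/4) with hs_def
  have hs0 : 0 ≤ s := Real.sqrt_nonneg _
  have hs2 : s^2 = b + 1/4 := Real.sq_sqrt hb4.le
  set α : ℝ := 1/2 + s with hα_def
  have hα : 0 < α := by positivity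
  set κ : ℝ := -a / (2*α) with hκ_def
  have h1 : α^2 - α = b := by rw [hα_def]; nlinarith [hs2]
  have h2 : 2*α*κ = -a := by rw [hκ_def]; field_simp
  have hκ2 : κ^2 = a^2 / (1 + 2*s)^2 := by
    rw [hκ_def, hα_def, div_pow]
    congr 1 <;> ring
  -- find a nice interval containing the support
  obtain ⟨c, M, hc0, hcM, hK⟩ : ∃ c M : ℝ, 0 < c ∧ c < M ∧ tsupport f ⊆ Set.Ioo c M := by
    rcases (tsupport f).eq_empty_or_nonempty with h | h
    · exact ⟨1, 2, one_pos, one_lt_two, by simp [h]⟩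
    · have hKc : IsCompact (tsupport f) := hsupp
      have hm := hKc.sInf_mem h
      have hmpos : (0:ℝ) < sInf (tsupport f) := hsupp' hm
      have hMs := hKc.sSup_mem h
      have hle : sInf (tsupport f) ≤ sSup (tsupport f) :=
        csInf_le_csSup h hKc.bddBelow hKc.bddAbove
      refine ⟨sInf (tsupport f) / 2, sSup (tsupport f) + 1, by linarith, by linarith, ?_⟩
      intro x hx
      constructor
      · have := csInf_le hKc.bddBelow hx; linarith
      · have := le_csSup hKc.bddAbove hx; linarith
  have hf0 : ∀ r, r ∉ Set.Ioo c M → f r = 0 := fun r hr =>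
    image_eq_zero_of_notMem_tsupport (fun h => hr (hK h))
  have hd0 : ∀ r, r ∉ Set.Ioo c M → deriv f r = 0 := by
    intro r hr
    by_contra h
    exact hr (hK (support_deriv_subset (by simpa using h)))
  have hfc : f c = 0 := hf0 c (by simp)
  have hfM : f M = 0 := hf0 M (by simp)
  -- continuity facts
  have hfcont : Continuous f := hf.continuous
  have hdcont : Continuous (deriv f) := hf.continuous_deriv (by simp)
  have huIcc : Set.uIcc c M = Set.Icc c M := Set.uIcc_of_le hcM.le
  have hne : ∀ x ∈ Set.uIcc c M, x ≠ 0 := by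
    intro x hx
    rw [huIcc] at hx
    exact (lt_of_lt_of_le hc0 hx.1).ne'
  -- continuity on the interval of the singular coefficients
  have hu_cont : ContinuousOn (fun r : ℝ => α / r - κ) (Set.uIcc c M) :=
    (continuousOn_const.div continuousOn_id hne).sub continuousOn_const
  have hu'_cont : ContinuousOn (fun r : ℝ => -α / r^2) (Set.uIcc c M) :=
    continuousOn_const.div (continuousOn_id.pow 2) (fun x hx => pow_ne_zero 2 (hne x hx))
  have hV_cont : ContinuousOn (fun r : ℝ => a / r + b / r^2) (Set.uIcc c M) :=
    (continuousOn_const.div continuousOn_id hne).add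
      (continuousOn_const.div (continuousOn_id.pow 2) (fun x hx => pow_ne_zero 2 (hne x hx)))
  -- interval integrabilities
  have I1 : IntervalIntegrable (fun r => deriv f r ^ 2 + (a / r + b / r ^ 2) * f r ^ 2)
      volume c M :=
    (((hdcont.continuousOn).pow 2).add (hV_cont.mul ((hfcont.continuousOn).pow 2))).intervalIntegrable
  have I2 : IntervalIntegrable (fun r => f r ^ 2) volume c M :=
    ((hfcont.pow 2).continuousOn).intervalIntegrable
  have I3 : IntervalIntegrable (fun r => (deriv f r - (α / r - κ) * f r) ^ 2) volume c M :=
    (((hdcont.continuousOn).sub (hu_cont.mul hfcont.continuousOn)).pow 2).intervalIntegrable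
  have I4 : IntervalIntegrable (fun r => (-α / r^2) * f r ^ 2) volume c M :=
    (hu'_cont.mul ((hfcont.continuousOn).pow 2)).intervalIntegrable
  have I5 : IntervalIntegrable (fun r => (α / r - κ) * (2 * f r * deriv f r)) volume c M :=
    (hu_cont.mul ((continuousOn_const.mul hfcont.continuousOn).mul
      hdcont.continuousOn)).intervalIntegrable
  -- integration by parts
  have hibp : (∫ r in c..M, ((-α / r^2) * f r ^ 2 + (α / r - κ) * (2 * f r * deriv f r))) = 0 := by
    have h := intervalIntegral.integral_deriv_mul_eq_sub
      (u := fun r : ℝ => α / r - κ) (v := fun r => f r ^ 2)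
      (u' := fun r : ℝ => -α / r^2) (v' := fun r => 2 * f r * deriv f r)
      (fun x hx => coulomb_aux_deriv_u α κ x (hne x hx))
      (fun x _ => by
        have h := ((hf.differentiable (by simp) x).hasDerivAt).pow 2
        norm_num at h
        exact h)
      hu'_cont.intervalIntegrable
      ((continuous_const.mul hfcont).mul hdcont).continuousOn.intervalIntegrable
    simpa [hfc, hfM] using h
  -- pointwise identity on the interval
  have hcongr : (∫ r in c..M, (deriv f r ^ 2 + (a / r + b / r ^ 2) * f r ^ 2 + κ^2 * f r ^ 2))
      = ∫ r in c..M, ((deriv f r - (α / r - κ) * f r) ^ 2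
          + ((-α / r^2) * f r ^ 2 + (α / r - κ) * (2 * f r * deriv f r))) := by
    apply intervalIntegral.integral_congr
    intro r _
    exact coulomb_aux_identity α κ a b r (deriv f r) (f r) h1 h2
  -- nonnegativity of the square term
  have hsq : (0:ℝ) ≤ ∫ r in c..M, (deriv f r - (α / r - κ) * f r) ^ 2 :=
    intervalIntegral.integral_nonneg hcM.le (fun x _ => sq_nonneg _)
  -- combine on the interval
  have hmain : (∫ r in c..M, (deriv f r ^ 2 + (a / r + b / r ^ 2) * f r ^ 2))
      + κ^2 * (∫ r in c..M, f r ^ 2) ≥ 0 := by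
    have e1 : (∫ r in c..M, (deriv f r ^ 2 + (a / r + b / r ^ 2) * f r ^ 2 + κ^2 * f r ^ 2))
        = (∫ r in c..M, (deriv f r ^ 2 + (a / r + b / r ^ 2) * f r ^ 2))
          + κ^2 * (∫ r in c..M, f r ^ 2) := by
      rw [intervalIntegral.integral_add I1 (I2.const_mul _), intervalIntegral.integral_const_mul]
    have e2 : (∫ r in c..M, ((deriv f r - (α / r - κ) * f r) ^ 2
          + ((-α / r^2) * f r ^ 2 + (α / r - κ) * (2 * f r * deriv f r))))
        = (∫ r in c..M, (deriv f r - (α / r - κ) * f r) ^ 2)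
          + (∫ r in c..M, ((-α / r^2) * f r ^ 2 + (α / r - κ) * (2 * f r * deriv f r))) :=
      intervalIntegral.integral_add I3 (I4.add I5)
    rw [← e1, hcongr, e2, hibp, add_zero]
    exact hsq
  -- transfer set integrals over Ioi 0 to interval integrals
  have hIoc : Set.Ioc c M ⊆ Set.Ioi (0:ℝ) := fun x hx => lt_trans hc0 hx.1
  have eqA : (∫ r in Set.Ioi (0:ℝ), (deriv f r ^ 2 + (a / r + b / r ^ 2) * f r ^ 2))
      = ∫ r in c..M, (deriv f r ^ 2 + (a / r + b / r ^ 2) * f r ^ 2) := by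
    rw [intervalIntegral.integral_of_le hcM.le]
    apply setIntegral_eq_of_subset_of_forall_diff_eq_zero measurableSet_Ioi hIoc
    intro x hx
    have hx' : x ∉ Set.Ioo c M := by
      intro h
      exact hx.2 ⟨h.1, h.2.le⟩
    rw [hf0 x hx', hd0 x hx']
    ring
  have eqB : (∫ r in Set.Ioi (0:ℝ), f r ^ 2) = ∫ r in c..M, f r ^ 2 := by
    rw [intervalIntegral.integral_of_le hcM.le]
    apply setIntegral_eq_of_subset_of_forall_diff_eq_zero measurableSet_Ioi hIoc
    intro x hx
    have hx' : x ∉ Set.Ioo c M := by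
      intro h
      exact hx.2 ⟨h.1, h.2.le⟩
    rw [hf0 x hx']
    ring
  rw [eqA, eqB, ← hκ2]
  linarith [hmain]
end
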